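/- arXiv:0803.3141 — 6 statements merged into one kernel-verified Lean document; each statement's English description precedes it below -/
import Mathlib

section
/- Let I ⊆ k[X₁,…,Xₙ] be an ideal over a field k and fix a term order. If β ∈ C(I) (the set of leading exponents of nonzero elements of I), then there exists a unique polynomial f_β ∈ I such that f_β is monic (leading coefficient 1), the leading exponent of f_β equals β, and every nonleading exponent of f_β lies in D(I) = ℕⁿ \ C(I). Moreover the collection {f_β : β ∈ C(I)} is a k-vector-space basis of I. -/
open MvPolynomial

/-- `β` is the leading exponent of `f` with respect to the monomial order `m`. -/
def IsLeadExp {σ : Type*} {k : Type*} [CommSemiring k] (m : MonomialOrder σ)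
    (f : MvPolynomial σ k) (β : σ →₀ ℕ) : Prop :=
  β ∈ f.support ∧ ∀ α ∈ f.support, α ≠ β → m.toSyn α < m.toSyn β

/-- `C(I)`: the set of leading exponents of nonzero elements of the ideal `I`. -/
def expC {σ : Type*} {k : Type*} [CommSemiring k] (m : MonomialOrder σ)
    (I : Ideal (MvPolynomial σ k)) : Set (σ →₀ ℕ) :=
  {β | ∃ f ∈ I, IsLeadExp m f β}

/-- `D(I)`: the standard set (set of exponents of standard monomials) of the ideal `I`. -/
def expD {σ : Type*} {k : Type*} [CommSemiring k] (m : MonomialOrder σ)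
    (I : Ideal (MvPolynomial σ k)) : Set (σ →₀ ℕ) :=
  (expC m I)ᶜ

/-- The vanishing ideal of a subset `A` of affine space `kⁿ`. -/
noncomputable def vanishingIdeal {σ : Type*} {k : Type*} [CommRing k] (A : Set (σ → k)) :
    Ideal (MvPolynomial σ k) :=
  ⨅ x ∈ A, RingHom.ker (MvPolynomial.eval x)

namespace CanonAux

variable {σ : Type*} {k : Type*} [Field k] (m : MonomialOrder σ)

noncomputable def mdeg (p : MvPolynomial σ k) : m.syn := p.support.sup m.toSyn

lemma le_mdeg {p : MvPolynomial σ k} {α} (h : α ∈ p.support) : m.toSyn α ≤ mdeg m p :=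
  Finset.le_sup h

lemma exists_isLeadExp {p : MvPolynomial σ k} (hp : p ≠ 0) :
    ∃ δ, IsLeadExp m p δ ∧ m.toSyn δ = mdeg m p := by
  obtain ⟨δ, hδ, hsup⟩ := Finset.exists_mem_eq_sup p.support
    (by simpa using hp) m.toSyn
  refine ⟨δ, ⟨hδ, fun α hα hne => lt_of_le_of_ne (hsup ▸ le_mdeg m hα)
    (fun h => hne (m.toSyn.injective h))⟩, hsup.symm⟩

lemma mem_support_sub {p q : MvPolynomial σ k} {α} (h : α ∈ (p - q).support) :
    α ∈ p.support ∨ α ∈ q.support := by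
  simp only [MvPolynomial.mem_support_iff] at *
  by_contra hc
  push_neg at hc
  simp [MvPolynomial.coeff_sub, hc.1, hc.2] at h

lemma mem_support_add {p q : MvPolynomial σ k} {α} (h : α ∈ (p + q).support) :
    α ∈ p.support ∨ α ∈ q.support := by
  simp only [MvPolynomial.mem_support_iff] at *
  by_contra hc
  push_neg at hc
  simp [MvPolynomial.coeff_add, hc.1, hc.2] at h

lemma mem_support_C_mul {c : k} {p : MvPolynomial σ k} {α}
    (h : α ∈ (C c * p).support) : α ∈ p.support := by
  simp only [MvPolynomial.mem_support_iff, MvPolynomial.coeff_C_mul] at *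
  exact fun h0 => h (by simp [h0])

lemma mem_support_smul {c : k} {p : MvPolynomial σ k} {α}
    (h : α ∈ (c • p).support) : α ∈ p.support := by
  simp only [MvPolynomial.mem_support_iff, MvPolynomial.coeff_smul, smul_eq_mul] at *
  exact fun h0 => h (by simp [h0])

/-- Every polynomial decomposes as an element of `I` plus a remainder supported in `D(I)`. -/
lemma decomp (I : Ideal (MvPolynomial σ k)) :
    ∀ d : m.syn, ∀ p : MvPolynomial σ k, mdeg m p ≤ d →
      ∃ h r : MvPolynomial σ k, h ∈ I ∧ (∀ α ∈ r.support, α ∈ expD m I) ∧ p = h + r := by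
  intro d
  induction d using WellFoundedLT.induction with
  | _ d ih =>
  intro p hpd
  classical
  by_cases hp0 : p = 0
  · exact ⟨0, 0, I.zero_mem, by simp, by simp [hp0]⟩
  obtain ⟨δ, hlead, hdeg⟩ := exists_isLeadExp m hp0
  have hc0 : p.coeff δ ≠ 0 := MvPolynomial.mem_support_iff.mp hlead.1
  by_cases hδ : δ ∈ expC m I
  · obtain ⟨g, hgI, hg⟩ := hδ
    have ha0 : g.coeff δ ≠ 0 := MvPolynomial.mem_support_iff.mp hg.1
    set e : k := p.coeff δ / g.coeff δ with he
    set q : MvPolynomial σ k := p - C e * g with hq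
    have hqI' : C e * g ∈ I := I.mul_mem_left _ hgI
    have hcoeffδ : q.coeff δ = 0 := by
      simp [hq, MvPolynomial.coeff_sub, MvPolynomial.coeff_C_mul, he,
        div_mul_cancel₀ _ ha0]
    have hlt : ∀ α ∈ q.support, m.toSyn α < m.toSyn δ := by
      intro α hα
      have hne : α ≠ δ := by
        rintro rfl; exact (MvPolynomial.mem_support_iff.mp hα) hcoeffδ
      rcases mem_support_sub hα with h1 | h1
      · exact hlead.2 α h1 hne
      · exact hg.2 α (mem_support_C_mul h1) hne
    by_cases hq0 : q = 0
    · refine ⟨p, 0, ?_, by simp, by simp⟩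
      have : p = C e * g := by rw [← sub_eq_zero]; exact hq ▸ hq0
      rw [this]; exact hqI'
    · have hdq : mdeg m q < d := by
        have h1 : mdeg m q < m.toSyn δ := by
          obtain ⟨ε, hε, hs⟩ := Finset.exists_mem_eq_sup q.support
            (by simpa using hq0) m.toSyn
          rw [mdeg, hs]; exact hlt ε hε
        exact lt_of_lt_of_le h1 (hdeg ▸ hpd)
      obtain ⟨h, r, hhI, hr, hqhr⟩ := ih (mdeg m q) hdq q le_rfl
      refine ⟨h + C e * g, r, I.add_mem hhI hqI', hr, ?_⟩
      rw [hq, sub_eq_iff_eq_add] at hqhr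
      rw [hqhr]; ring
  · set q : MvPolynomial σ k := p - monomial δ (p.coeff δ) with hq
    have hcoeffδ : q.coeff δ = 0 := by
      simp [hq, MvPolynomial.coeff_sub, MvPolynomial.coeff_monomial]
    have hmono : ∀ α, α ∈ (monomial δ (p.coeff δ) : MvPolynomial σ k).support → α = δ := by
      intro α hα
      have := MvPolynomial.mem_support_iff.mp hα
      rw [MvPolynomial.coeff_monomial] at this
      by_contra hne
      simp [Ne.symm hne] at this
    have hlt : ∀ α ∈ q.support, m.toSyn α < m.toSyn δ := by
      intro α hα
      have hne : α ≠ δ := by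
        rintro rfl; exact (MvPolynomial.mem_support_iff.mp hα) hcoeffδ
      rcases mem_support_sub hα with h1 | h1
      · exact hlead.2 α h1 hne
      · exact absurd (hmono α h1) hne
    by_cases hq0 : q = 0
    · refine ⟨0, p, I.zero_mem, ?_, by simp⟩
      intro α hα
      have hp : p = monomial δ (p.coeff δ) := by rw [← sub_eq_zero]; exact hq ▸ hq0
      rw [hp] at hα
      rw [hmono α hα]; exact hδ
    · have hdq : mdeg m q < d := by
        have h1 : mdeg m q < m.toSyn δ := by
          obtain ⟨ε, hε, hs⟩ := Finset.exists_mem_eq_sup q.support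
            (by simpa using hq0) m.toSyn
          rw [mdeg, hs]; exact hlt ε hε
        exact lt_of_lt_of_le h1 (hdeg ▸ hpd)
      obtain ⟨h, r, hhI, hr, hqhr⟩ := ih (mdeg m q) hdq q le_rfl
      refine ⟨h, r + monomial δ (p.coeff δ), hhI, ?_, ?_⟩
      · intro α hα
        rcases mem_support_add hα with h1 | h1
        · exact hr α h1
        · rw [hmono α h1]; exact hδ
      · rw [hq, sub_eq_iff_eq_add] at hqhr
        linear_combination hqhr

end CanonAux

namespace CanonAux

variable {σ : Type*} {k : Type*} [Field k] (m : MonomialOrder σ)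

/-- Any nonzero element of `I` whose support avoiding `β` lies in `D(I)` and whose `β`-coeff
vanishes must be zero. -/
lemma eq_zero_of_support_D {I : Ideal (MvPolynomial σ k)} {g : MvPolynomial σ k}
    (hgI : g ∈ I) (hsupp : ∀ α ∈ g.support, α ∈ expD m I) : g = 0 := by
  by_contra hg0
  obtain ⟨γ, hγ, -⟩ := exists_isLeadExp m hg0
  exact (hsupp γ hγ.1) ⟨g, hgI, hγ⟩

/-- Existence of the canonical element. -/
lemma exists_canonical (I : Ideal (MvPolynomial σ k)) {β : σ →₀ ℕ} (hβ : β ∈ expC m I) :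
    ∃ f : MvPolynomial σ k, f ∈ I ∧ MvPolynomial.coeff β f = 1 ∧
      IsLeadExp m f β ∧ ∀ α ∈ f.support, α ≠ β → α ∈ expD m I := by
  classical
  obtain ⟨h, r, hhI, hr, hmr⟩ := decomp m I (mdeg m (monomial β (1 : k)))
    (monomial β (1 : k)) le_rfl
  have hrβ : r.coeff β = 0 := by
    by_contra h0
    exact (hr β (MvPolynomial.mem_support_iff.mpr h0)) hβ
  set f : MvPolynomial σ k := monomial β (1 : k) - r with hf
  have hfh : f = h := by rw [hf, hmr]; ring
  have hfI : f ∈ I := hfh ▸ hhI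
  have hcβ : f.coeff β = 1 := by
    simp [hf, MvPolynomial.coeff_sub, MvPolynomial.coeff_monomial, hrβ]
  have hnon : ∀ α ∈ f.support, α ≠ β → α ∈ expD m I := by
    intro α hα hne
    rcases mem_support_sub (hf ▸ hα) with h1 | h1
    · have := MvPolynomial.mem_support_iff.mp h1
      rw [MvPolynomial.coeff_monomial] at this
      exact absurd (by by_contra hc; simp [Ne.symm hne] at this) (fun (h : β = α) => hne h.symm)
    · have : α ∈ r.support := by
        simpa using h1
      exact hr α this
  have hf0 : f ≠ 0 := fun h0 => by simp [h0] at hcβ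
  obtain ⟨γ, hγlead, -⟩ := exists_isLeadExp m hf0
  have hγβ : γ = β := by
    by_contra hne
    exact (hnon γ hγlead.1 hne) ⟨f, hfI, hγlead⟩
  exact ⟨f, hfI, hcβ, hγβ ▸ hγlead, hnon⟩

/-- Uniqueness of the canonical element. -/
lemma unique_canonical (I : Ideal (MvPolynomial σ k)) {β : σ →₀ ℕ}
    {f f' : MvPolynomial σ k}
    (hf : f ∈ I ∧ MvPolynomial.coeff β f = 1 ∧
      IsLeadExp m f β ∧ ∀ α ∈ f.support, α ≠ β → α ∈ expD m I)
    (hf' : f' ∈ I ∧ MvPolynomial.coeff β f' = 1 ∧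
      IsLeadExp m f' β ∧ ∀ α ∈ f'.support, α ≠ β → α ∈ expD m I) : f = f' := by
  have hg : ∀ α ∈ (f - f').support, α ∈ expD m I := by
    intro α hα
    have hne : α ≠ β := by
      rintro rfl
      have := MvPolynomial.mem_support_iff.mp hα
      rw [MvPolynomial.coeff_sub, hf.2.1, hf'.2.1] at this
      simp at this
    rcases mem_support_sub hα with h1 | h1
    · exact hf.2.2.2 α h1 hne
    · exact hf'.2.2.2 α h1 hne
  have := eq_zero_of_support_D m (I.sub_mem hf.1 hf'.1) hg
  rwa [sub_eq_zero] at this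

/-- Span. -/
lemma mem_span (I : Ideal (MvPolynomial σ k)) (F : expC m I → MvPolynomial σ k)
    (hF : ∀ b : expC m I, F b ∈ I ∧ MvPolynomial.coeff (b : σ →₀ ℕ) (F b) = 1 ∧
      IsLeadExp m (F b) (b : σ →₀ ℕ) ∧
      ∀ α ∈ (F b).support, α ≠ (b : σ →₀ ℕ) → α ∈ expD m I) :
    ∀ d : m.syn, ∀ p ∈ I, mdeg m p ≤ d → p ∈ Submodule.span k (Set.range F) := by
  intro d
  induction d using WellFoundedLT.induction with
  | _ d ih =>
  intro p hpI hpd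
  by_cases hp0 : p = 0
  · simp [hp0]
  obtain ⟨δ, hlead, hdeg⟩ := exists_isLeadExp m hp0
  have hδC : δ ∈ expC m I := ⟨p, hpI, hlead⟩
  set b : expC m I := ⟨δ, hδC⟩ with hb
  set c : k := p.coeff δ with hc
  set q : MvPolynomial σ k := p - c • F b with hq
  have hFspan : F b ∈ Submodule.span k (Set.range F) :=
    Submodule.subset_span ⟨b, rfl⟩
  have hcoeffδ : q.coeff δ = 0 := by
    have h1 : MvPolynomial.coeff δ (F b) = 1 := (hF b).2.1
    simp [hq, MvPolynomial.coeff_sub, MvPolynomial.coeff_smul, h1, hc]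
  have hqI : q ∈ I := by
    rw [hq, MvPolynomial.smul_eq_C_mul]
    exact I.sub_mem hpI (I.mul_mem_left _ (hF b).1)
  have hlt : ∀ α ∈ q.support, m.toSyn α < m.toSyn δ := by
    intro α hα
    have hne : α ≠ δ := by
      rintro rfl; exact (MvPolynomial.mem_support_iff.mp hα) hcoeffδ
    rcases mem_support_sub hα with h1 | h1
    · exact hlead.2 α h1 hne
    · exact (hF b).2.2.1.2 α (mem_support_smul h1) hne
  have hpsum : p = q + c • F b := by rw [hq]; ring
  by_cases hq0 : q = 0
  · rw [hpsum, hq0, zero_add]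
    exact Submodule.smul_mem _ _ hFspan
  · have hdq : mdeg m q < d := by
      have h1 : mdeg m q < m.toSyn δ := by
        obtain ⟨ε, hε, hs⟩ := Finset.exists_mem_eq_sup q.support
          (by simpa using hq0) m.toSyn
        rw [mdeg, hs]; exact hlt ε hε
      exact lt_of_lt_of_le h1 (hdeg ▸ hpd)
    have hqspan := ih (mdeg m q) hdq q hqI le_rfl
    rw [hpsum]
    exact Submodule.add_mem _ hqspan (Submodule.smul_mem _ _ hFspan)

end CanonAux

/-- For an ideal `I ⊆ k[X₁,…,Xₙ]` and `β ∈ C(I)`, there is a unique monic `f_β ∈ I` with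
leading exponent `β` all of whose nonleading exponents lie in `D(I)`; moreover any choice
of such polynomials, indexed by `C(I)`, is a `k`-vector-space basis of `I`. -/
theorem exists_unique_canonical_basis {k : Type*} [Field k] {n : ℕ}
    (m : MonomialOrder (Fin n)) (I : Ideal (MvPolynomial (Fin n) k))
    (β : Fin n →₀ ℕ) (hβ : β ∈ expC m I) :
    (∃! f : MvPolynomial (Fin n) k, f ∈ I ∧ MvPolynomial.coeff β f = 1 ∧
        IsLeadExp m f β ∧ ∀ α ∈ f.support, α ≠ β → α ∈ expD m I) ∧
      (∀ F : expC m I → MvPolynomial (Fin n) k,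
        (∀ b : expC m I, F b ∈ I ∧ MvPolynomial.coeff (b : Fin n →₀ ℕ) (F b) = 1 ∧
          IsLeadExp m (F b) (b : Fin n →₀ ℕ) ∧
          ∀ α ∈ (F b).support, α ≠ (b : Fin n →₀ ℕ) → α ∈ expD m I) →
        LinearIndependent k F ∧
          Submodule.span k (Set.range F) =
            Submodule.restrictScalars k (I : Submodule (MvPolynomial (Fin n) k)
              (MvPolynomial (Fin n) k))) := by
  constructor
  · obtain ⟨f, hf⟩ := CanonAux.exists_canonical m I hβ
    exact ⟨f, hf, fun f' hf' => CanonAux.unique_canonical m I hf' hf⟩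
  · intro F hF
    constructor
    · rw [linearIndependent_iff']
      intro s g hsum i hi
      have hcoeff := congrArg (MvPolynomial.coeff (i : Fin n →₀ ℕ)) hsum
      rw [MvPolynomial.coeff_sum] at hcoeff
      rw [Finset.sum_eq_single i] at hcoeff
      · rw [MvPolynomial.coeff_smul, (hF i).2.1, smul_eq_mul, mul_one] at hcoeff
        simpa using hcoeff
      · intro j hj hji
        rw [MvPolynomial.coeff_smul]
        have hz : MvPolynomial.coeff (i : Fin n →₀ ℕ) (F j) = 0 := by
          by_contra h0
          have hmem : (i : Fin n →₀ ℕ) ∈ (F j).support :=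
            MvPolynomial.mem_support_iff.mpr h0
          have hne : (i : Fin n →₀ ℕ) ≠ (j : Fin n →₀ ℕ) :=
            fun h => hji (Subtype.ext h).symm
          exact ((hF j).2.2.2 _ hmem hne) i.2
        simp [hz]
      · intro h; exact absurd hi h
    · apply le_antisymm
      · rw [Submodule.span_le]
        rintro _ ⟨b, rfl⟩
        exact (hF b).1
      · intro p hp
        exact CanonAux.mem_span m I F hF (CanonAux.mdeg m p) p hp le_rfl
end

section
/- The set of minimal free variables of a d-dimensional affine subspace A′ of kⁿ is unique: there is exactly one J ⊆ {1,…,n} with #J = d such that {X_j : j ∈ J} is a set of minimal free variables of A′. -/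
/-- `{X_j : j ∈ J}` is a set of free variables of `A′ ⊆ kⁿ`: for every choice of values of
the coordinates in `J` there is a unique point of `A′` with these coordinates. -/
def IsFreeVars {k : Type*} [Field k] {n : ℕ} (A' : Set (Fin n → k)) (J : Finset (Fin n)) :
    Prop :=
  ∀ v : Fin n → k, ∃! x, x ∈ A' ∧ ∀ j ∈ J, x j = v j

/-- `{X_j : j ∈ J}` is the set of *minimal* free variables of `A′`: it is a set of free
variables, and no `j ∈ J` can be replaced by a smaller index `i ∉ J` so that the result is
still a set of free variables. -/
def IsMinFreeVars {k : Type*} [Field k] {n : ℕ} (A' : Set (Fin n → k)) (J : Finset (Fin n)) :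
    Prop :=
  IsFreeVars A' J ∧
    ∀ j ∈ J, ∀ i ∉ J, i < j → ¬ IsFreeVars A' (insert i (J.erase j))

/-- `A′` is a `d`-dimensional affine subspace of `kⁿ`. -/
def IsAffineDPlane {k : Type*} [Field k] {n : ℕ} (d : ℕ) (A' : Set (Fin n → k)) : Prop :=
  ∃ S : AffineSubspace k (Fin n → k),
    A' = (S : Set (Fin n → k)) ∧ A'.Nonempty ∧ Module.finrank k S.direction = d

namespace MinFreeVarsAux

open Module Function

variable {k : Type*} [Field k] {n d : ℕ}

/-- coordinates in `J` determine elements of `W` -/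
def Inj (W : Submodule k (Fin n → k)) (J : Finset (Fin n)) : Prop :=
  ∀ w ∈ W, (∀ j ∈ J, w j = 0) → w = 0

/-- coordinates in `J` are arbitrary on `W` -/
def Surj (W : Submodule k (Fin n → k)) (J : Finset (Fin n)) : Prop :=
  ∀ v : Fin n → k, ∃ w ∈ W, ∀ j ∈ J, w j = v j

/-- the coordinate projection `W → (J → k)` -/
def phi (W : Submodule k (Fin n → k)) (J : Finset (Fin n)) : W →ₗ[k] (J → k) :=
  LinearMap.pi fun j => (LinearMap.proj (j : Fin n)).comp W.subtype

lemma phi_apply (W : Submodule k (Fin n → k)) (J : Finset (Fin n)) (w : W) (j : J) :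
    phi W J w j = (w : Fin n → k) j := rfl

lemma injective_phi_iff {W : Submodule k (Fin n → k)} {J : Finset (Fin n)} :
    Function.Injective (phi W J) ↔ Inj W J := by
  constructor
  · intro h w hw h0
    have h1 : phi W J ⟨w, hw⟩ = phi W J 0 := by
      ext j; simp [phi_apply, h0 j j.2]
    simpa [Subtype.ext_iff] using h h1
  · intro h a b hab
    have hmem : (a : Fin n → k) - b ∈ W := sub_mem a.2 b.2
    have h2 : ((a : Fin n → k) - b) = 0 := by
      refine h _ hmem fun j hj => ?_
      have h3 := congrFun hab ⟨j, hj⟩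
      simp only [phi_apply] at h3
      simp [h3]
    exact Subtype.ext (sub_eq_zero.mp h2)

lemma surjective_phi_iff {W : Submodule k (Fin n → k)} {J : Finset (Fin n)} :
    Function.Surjective (phi W J) ↔ Surj W J := by
  constructor
  · intro h v
    obtain ⟨w, hw⟩ := h fun j => v j
    exact ⟨w, w.2, fun j hj => congrFun hw ⟨j, hj⟩⟩
  · intro h u
    obtain ⟨w, hwW, hw⟩ := h fun t => if ht : t ∈ J then u ⟨t, ht⟩ else 0
    refine ⟨⟨w, hwW⟩, ?_⟩
    ext j
    show w (j : Fin n) = u j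
    rw [hw j j.2]
    simp

lemma card_eq_of_bij {W : Submodule k (Fin n → k)} (hW : finrank k W = d)
    {J : Finset (Fin n)} (hi : Inj W J) (hs : Surj W J) : J.card = d := by
  have e := LinearEquiv.ofBijective (phi W J)
    ⟨injective_phi_iff.mpr hi, surjective_phi_iff.mpr hs⟩
  have h := e.finrank_eq
  rw [hW, Module.finrank_pi, Fintype.card_coe] at h
  exact h.symm

lemma surj_of_inj {W : Submodule k (Fin n → k)} (hW : finrank k W = d)
    {J : Finset (Fin n)} (hc : J.card = d) (hi : Inj W J) : Surj W J := by
  have hfr : finrank k W = finrank k (J → k) := by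
    rw [hW, Module.finrank_pi, Fintype.card_coe, hc]
  exact surjective_phi_iff.mp
    ((LinearMap.injective_iff_surjective_of_finrank_eq_finrank hfr).mp
      (injective_phi_iff.mpr hi))

lemma exists_inj_card {W : Submodule k (Fin n → k)} (hW : finrank k W = d) :
    ∃ J : Finset (Fin n), J.card = d ∧ Inj W J := by
  obtain ⟨J, hJ, hmin⟩ := Set.exists_min_image {J : Finset (Fin n) | Inj W J}
    (fun J => J.card) (Set.toFinite _)
    ⟨Finset.univ, fun w _ h0 => funext fun t => h0 t (Finset.mem_univ t)⟩
  have hJ : Inj W J := hJ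
  refine ⟨J, le_antisymm ?_ ?_, hJ⟩
  · -- J.card ≤ d via linear independence of "dual-like" vectors
    have hW' : ∀ j : J, ∃ z, z ∈ W ∧ z (j : Fin n) ≠ 0 ∧
        ∀ j' ∈ J, j' ≠ (j : Fin n) → z j' = 0 := by
      intro j
      have hpos : 0 < J.card := Finset.card_pos.mpr ⟨j, j.2⟩
      have hnot : ¬ Inj W (J.erase j) := by
        intro hInj
        have h1 := hmin _ hInj
        have h2 := Finset.card_erase_of_mem j.2
        omega
      simp only [Inj, not_forall] at hnot
      obtain ⟨z, hzW, hz0, hzne⟩ := hnot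
      have hzj : z (j : Fin n) ≠ 0 := by
        intro h
        refine hzne (hJ z hzW fun j' hj' => ?_)
        by_cases hjj : j' = (j : Fin n)
        · rw [hjj]; exact h
        · exact hz0 j' (Finset.mem_erase.mpr ⟨hjj, hj'⟩)
      exact ⟨z, hzW, hzj, fun j' hj' hne => hz0 j' (Finset.mem_erase.mpr ⟨hne, hj'⟩)⟩
    choose z hzW hzj hz0 using hW'
    have hli : LinearIndependent k z := by
      rw [Fintype.linearIndependent_iff]
      intro g hg j
      have h := congrFun hg (j : Fin n)
      rw [Finset.sum_apply] at h
      rw [Finset.sum_eq_single j] at h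
      · have : g j * z j (j : Fin n) = 0 := by simpa using h
        rcases mul_eq_zero.mp this with h' | h'
        · exact h'
        · exact absurd h' (hzj j)
      · intro b _ hb
        have hne : (j : Fin n) ≠ (b : Fin n) := fun h' => hb (Subtype.ext h'.symm)
        simp [hz0 b (j : Fin n) j.2 hne]
      · intro h'
        exact absurd (Finset.mem_univ j) h'
    have hcomp : (W.subtype ∘ fun j : J => (⟨z j, hzW j⟩ : W)) = z := rfl
    have hli' : LinearIndependent k fun j : J => (⟨z j, hzW j⟩ : W) := by
      refine LinearIndependent.of_comp W.subtype ?_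
      rw [show (⇑W.subtype ∘ fun j : J => (⟨z j, hzW j⟩ : W)) = z from rfl]
      exact hli
    have := hli'.fintype_card_le_finrank
    rwa [Fintype.card_coe, hW] at this
  · -- d ≤ J.card
    have h1 : Function.Injective (phi W J) := injective_phi_iff.mpr hJ
    have h2 := LinearMap.finrank_le_finrank_of_injective h1
    rwa [hW, Module.finrank_pi, Fintype.card_coe] at h2

lemma exchange {W : Submodule k (Fin n → k)} (hW : finrank k W = d)
    {B1 B2 : Finset (Fin n)} (h1i : Inj W B1) (h1c : B1.card = d)
    (h2s : Surj W B2) {i : Fin n} (hi2 : i ∈ B2) (hi1 : i ∉ B1) :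
    ∃ j ∈ B1, j ∉ B2 ∧ Inj W (insert i (B1.erase j)) := by
  have h1s : Surj W B1 := surj_of_inj hW h1c h1i
  have hw' : ∀ j : B1, ∃ w, w ∈ W ∧ w (j : Fin n) = 1 ∧
      ∀ j' ∈ B1, j' ≠ (j : Fin n) → w j' = 0 := by
    intro j
    obtain ⟨w, hwW, hw⟩ := h1s (fun t => if t = (j : Fin n) then 1 else 0)
    refine ⟨w, hwW, by simpa using hw _ j.2, fun j' hj' hne => by simpa [hne] using hw j' hj'⟩
  choose w hwW hw1 hw0 using hw'
  obtain ⟨u, huW, hu⟩ := h2s (fun t => if t = i then 1 else 0)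
  have hui : u i = 1 := by simpa using hu i hi2
  have hu0 : ∀ j' ∈ B2, j' ≠ i → u j' = 0 := fun j' hj' hne => by simpa [hne] using hu j' hj'
  by_contra hcon
  push_neg at hcon
  have key : ∀ j : B1, (j : Fin n) ∉ B2 → w j i = 0 := by
    intro j hj
    have hnot := hcon j j.2 hj
    simp only [Inj, not_forall] at hnot
    obtain ⟨z, hzW, hz, hzne⟩ := hnot
    have hzi : z i = 0 := hz i (Finset.mem_insert_self _ _)
    have hze : ∀ j' ∈ B1.erase (j : Fin n), z j' = 0 :=
      fun j' hj' => hz j' (Finset.mem_insert_of_mem hj')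
    have hzz : z - z (j : Fin n) • w j = 0 := by
      refine h1i _ (sub_mem hzW (Submodule.smul_mem _ _ (hwW j))) fun j' hj' => ?_
      by_cases hjj : j' = (j : Fin n)
      · subst hjj
        simp [hw1 j]
      · have h1 := hze j' (Finset.mem_erase.mpr ⟨hjj, hj'⟩)
        have h2 := hw0 j j' hj' hjj
        simp [h1, h2]
    have hzeq : z = z (j : Fin n) • w j := sub_eq_zero.mp hzz
    have hzjne : z (j : Fin n) ≠ 0 := by
      intro h
      exact hzne (by rw [hzeq, h, zero_smul])
    have : z (j : Fin n) * w j i = 0 := by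
      have := congrFun hzeq i
      rw [hzi] at this
      simpa using this.symm
    rcases mul_eq_zero.mp this with h' | h'
    · exact absurd h' hzjne
    · exact h'
  have hy : u - ∑ j : B1, u (j : Fin n) • w j = 0 := by
    refine h1i _ (sub_mem huW (Submodule.sum_mem _ fun j _ =>
      Submodule.smul_mem _ _ (hwW j))) fun j' hj' => ?_
    have hsum : (∑ j : B1, u (j : Fin n) • w j) j' = u j' := by
      rw [Finset.sum_apply]
      rw [Finset.sum_eq_single (⟨j', hj'⟩ : B1)]
      · simp [hw1 ⟨j', hj'⟩]
      · intro b _ hb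
        have hne : j' ≠ (b : Fin n) := fun h => hb (Subtype.ext h.symm)
        simp [hw0 b j' hj' hne]
      · intro h'
        exact absurd (Finset.mem_univ _) h'
    have hrfl : (u - ∑ j : B1, u (j : Fin n) • w j) j'
        = u j' - (∑ j : B1, u (j : Fin n) • w j) j' := rfl
    rw [hrfl, hsum, sub_self]
  have hueq : u = ∑ j : B1, u (j : Fin n) • w j := sub_eq_zero.mp hy
  have h1 : (1 : k) = ∑ j : B1, u (j : Fin n) * w j i := by
    have h := congrFun hueq i
    rw [Finset.sum_apply] at h
    simpa [hui] using h
  have h0 : ∀ j : B1, u (j : Fin n) * w j i = 0 := by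
    intro j
    by_cases hj : (j : Fin n) ∈ B2
    · rw [hu0 _ hj (fun h => hi1 (h ▸ j.2)), zero_mul]
    · rw [key j hj, mul_zero]
  rw [Finset.sum_eq_zero fun j _ => h0 j] at h1
  exact one_ne_zero h1

end MinFreeVarsAux

/-- The set of minimal free variables of a `d`-dimensional affine subspace `A′ ⊆ kⁿ` is
unique: there is exactly one `J ⊆ {1,…,n}` with `#J = d` such that `{X_j : j ∈ J}` is a set
of minimal free variables of `A′`. -/
theorem minFreeVars_unique {k : Type*} [Field k] {n d : ℕ} (A' : Set (Fin n → k))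
    (hA : IsAffineDPlane d A') :
    ∃! J : Finset (Fin n), J.card = d ∧ IsMinFreeVars A' J := by
  classical
  obtain ⟨S, hS, hne, hd⟩ := hA
  subst hS
  obtain ⟨p, hp⟩ := hne
  have hp' : p ∈ S := hp
  set W := S.direction with hWdef
  have freeIff : ∀ J : Finset (Fin n),
      IsFreeVars (S : Set (Fin n → k)) J ↔ (MinFreeVarsAux.Inj W J ∧ MinFreeVarsAux.Surj W J) := by
    intro J
    constructor
    · intro h
      constructor
      · intro w hw h0
        obtain ⟨x, _, hxu⟩ := h p
        have h1 : w + p ∈ (S : Set (Fin n → k)) ∧ ∀ j ∈ J, (w + p) j = p j := by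
          constructor
          · have := AffineSubspace.vadd_mem_of_mem_direction hw hp'
            simpa [vadd_eq_add] using this
          · intro j hj; simp [h0 j hj]
        have h2 : p ∈ (S : Set (Fin n → k)) ∧ ∀ j ∈ J, p j = p j := ⟨hp, fun _ _ => rfl⟩
        have h3 : w + p = p := (hxu _ h1).trans (hxu _ h2).symm
        have := congrArg (fun y => y - p) h3
        simpa using this
      · intro v
        obtain ⟨x, ⟨hxA, hxc⟩, -⟩ := h (v + p)
        refine ⟨x - p, ?_, fun j hj => by simp [hxc j hj]⟩
        have := AffineSubspace.vsub_mem_direction (show x ∈ S from hxA) hp'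
        simpa [vsub_eq_sub] using this
    · rintro ⟨hInj, hSurj⟩ v
      obtain ⟨w, hwW, hw⟩ := hSurj (v - p)
      have hxA : w + p ∈ (S : Set (Fin n → k)) := by
        simpa [vadd_eq_add] using AffineSubspace.vadd_mem_of_mem_direction hwW hp'
      refine ⟨w + p, ⟨hxA, fun j hj => by simp [hw j hj]⟩, ?_⟩
      rintro y ⟨hyA, hyc⟩
      have hsub : y - (w + p) ∈ W := by
        simpa [vsub_eq_sub] using
          AffineSubspace.vsub_mem_direction (show y ∈ S from hyA) (show w + p ∈ S from hxA)
      have hzero : y - (w + p) = 0 := by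
        refine hInj _ hsub fun j hj => ?_
        simp [hyc j hj, hw j hj]
      have := sub_eq_zero.mp hzero
      exact this
  have card_free : ∀ J, IsFreeVars (S : Set (Fin n → k)) J → J.card = d := by
    intro J hJ
    obtain ⟨h1, h2⟩ := (freeIff J).mp hJ
    exact MinFreeVarsAux.card_eq_of_bij hd h1 h2
  obtain ⟨Jx, hJxc, hJxi⟩ := MinFreeVarsAux.exists_inj_card hd
  have hJxfree : IsFreeVars (S : Set (Fin n → k)) Jx :=
    (freeIff Jx).mpr ⟨hJxi, MinFreeVarsAux.surj_of_inj hd hJxc hJxi⟩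
  obtain ⟨J0, hJ0free, hJ0min⟩ := Set.exists_min_image
    {J : Finset (Fin n) | IsFreeVars (S : Set (Fin n → k)) J}
    (fun J => ∑ j ∈ J, (j : ℕ)) (Set.toFinite _) ⟨Jx, hJxfree⟩
  have hJ0free : IsFreeVars (S : Set (Fin n → k)) J0 := hJ0free
  have hJ0minfree : IsMinFreeVars (S : Set (Fin n → k)) J0 := by
    refine ⟨hJ0free, fun j hj i hi hij hfree => ?_⟩
    have hle := hJ0min _ hfree
    have h1 : ∑ t ∈ insert i (J0.erase j), (t : ℕ) = i + ∑ t ∈ J0.erase j, (t : ℕ) :=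
      Finset.sum_insert (fun h => hi (Finset.mem_of_mem_erase h))
    have h2 : ∑ t ∈ J0, (t : ℕ) = j + ∑ t ∈ J0.erase j, (t : ℕ) :=
      (Finset.add_sum_erase _ _ hj).symm
    have h3 : (i : ℕ) < j := hij
    simp only [h1, h2] at hle
    omega
  have key : ∀ B1 B2 : Finset (Fin n), IsMinFreeVars (S : Set (Fin n → k)) B1 →
      IsFreeVars (S : Set (Fin n → k)) B2 →
      ∀ i ∈ B2, i ∉ B1 → (∀ x ∈ (B1 \ B2) ∪ (B2 \ B1), i ≤ x) → False := by
    intro B1 B2 hB1 hB2 i hi2 hi1 hmin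
    obtain ⟨h1i, h1s⟩ := (freeIff B1).mp hB1.1
    obtain ⟨h2i, h2s⟩ := (freeIff B2).mp hB2
    obtain ⟨j, hj1, hj2, hinj⟩ := MinFreeVarsAux.exchange hd h1i (card_free _ hB1.1) h2s hi2 hi1
    have hcard : (insert i (B1.erase j)).card = d := by
      rw [Finset.card_insert_of_notMem (fun h => hi1 (Finset.mem_of_mem_erase h)),
        Finset.card_erase_of_mem hj1]
      have hpos : 0 < B1.card := Finset.card_pos.mpr ⟨j, hj1⟩
      have hc := card_free _ hB1.1
      omega
    have hfree : IsFreeVars (S : Set (Fin n → k)) (insert i (B1.erase j)) :=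
      (freeIff _).mpr ⟨hinj, MinFreeVarsAux.surj_of_inj hd hcard hinj⟩
    have hij : i < j := by
      have hle : i ≤ j := hmin j (Finset.mem_union_left _ (Finset.mem_sdiff.mpr ⟨hj1, hj2⟩))
      exact lt_of_le_of_ne hle (fun h => hi1 (h ▸ hj1))
    exact hB1.2 j hj1 i hi1 hij hfree
  refine ⟨J0, ⟨card_free _ hJ0free, hJ0minfree⟩, ?_⟩
  rintro J ⟨hJc, hJmin⟩
  by_contra hne
  have hsne : ((J \ J0) ∪ (J0 \ J)).Nonempty := by
    rw [Finset.nonempty_iff_ne_empty]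
    intro h
    rw [Finset.union_eq_empty] at h
    exact hne (Finset.Subset.antisymm
      (Finset.sdiff_eq_empty_iff_subset.mp h.1) (Finset.sdiff_eq_empty_iff_subset.mp h.2))
  set s := (J \ J0) ∪ (J0 \ J) with hs
  have hi := Finset.min'_mem s hsne
  have hmin : ∀ x ∈ s, s.min' hsne ≤ x := fun x hx => Finset.min'_le s x hx
  rcases Finset.mem_union.mp hi with hcase | hcase
  · obtain ⟨hiJ, hiJ0⟩ := Finset.mem_sdiff.mp hcase
    exact key J0 J hJ0minfree hJmin.1 _ hiJ hiJ0
      (fun x hx => hmin x (by rwa [Finset.union_comm] at hx))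
  · obtain ⟨hiJ0, hiJ⟩ := Finset.mem_sdiff.mp hcase
    exact key J J0 hJmin hJ0free _ hiJ0 hiJ (fun x hx => hmin x hx)
end

section
/- Let J ⊆ {1,…,n} with #J = d and let r(J) = Σ_{i ∉ J} #{j ∈ J : j < i}. Then the set X(J,n) of affine d-planes in kⁿ whose set of minimal free variables is {X_j : j ∈ J} is in bijection with k^{r(J)+n−d}, via the unique normal-form equations X_i + Σ_{j ∈ J, j < i} b_{i,j} X_j + c_i = 0 (i ∉ J). -/
/-!
An affine subspace of `kⁿ` on which the coordinates in `J` are free is the graph of an affine map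
`k^J → k^{Jᶜ}`, i.e. the solution set of a system `X_i + ∑_{j ∈ J} a_{i,j} X_j + c_i = 0`
(`i ∉ J`) whose coefficients are determined by the subspace; its dimension is `#J`.
Minimality of `J` says exactly that `a_{i,j} = 0` whenever `i < j`: if `a_{i,j} ≠ 0`, the `i`-th
equation can be solved for `X_j`, so `j` may be exchanged for `i`; if `a_{i,j} = 0`, the points
with `J`-coordinates `0` and `e_j` agree on `insert i (J.erase j)`. So the stratum is parametrized
by the remaining coefficients `a_{i,j}` (`j < i`) and `c_i`.
-/

open Finset

section

variable {k : Type*} [Field k] {n : ℕ}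

section Graph

variable {J : Finset (Fin n)} {a a' : Fin n → Fin n → k} {c c' v x : Fin n → k}

def graphSet (J : Finset (Fin n)) (a : Fin n → Fin n → k) (c : Fin n → k) : Set (Fin n → k) :=
  {x | ∀ i ∉ J, x i + ∑ j ∈ J, a i j * x j + c i = 0}

def graphPoint (J : Finset (Fin n)) (a : Fin n → Fin n → k) (c v : Fin n → k) : Fin n → k :=
  fun i => if i ∈ J then v i else -(∑ j ∈ J, a i j * v j + c i)

lemma graphPoint_of_mem {i : Fin n} (hi : i ∈ J) : graphPoint J a c v i = v i := if_pos hi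

lemma graphPoint_of_notMem {i : Fin n} (hi : i ∉ J) :
    graphPoint J a c v i = -(∑ j ∈ J, a i j * v j + c i) := if_neg hi

lemma graphPoint_mem : graphPoint J a c v ∈ graphSet J a c := by
  intro i hi
  rw [sum_congr rfl fun j hj => by rw [graphPoint_of_mem hj], graphPoint_of_notMem hi]
  ring

lemma eq_graphPoint_of_mem (hx : x ∈ graphSet J a c) (hxv : ∀ j ∈ J, x j = v j) :
    x = graphPoint J a c v := by
  funext i
  by_cases hi : i ∈ J
  · rw [graphPoint_of_mem hi, hxv i hi]
  · have hsum : ∑ j ∈ J, a i j * x j = ∑ j ∈ J, a i j * v j :=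
      sum_congr rfl fun j hj => by rw [hxv j hj]
    rw [graphPoint_of_notMem hi, ← hsum]
    linear_combination hx i hi

lemma mem_graphSet_iff_eq_graphPoint : x ∈ graphSet J a c ↔ x = graphPoint J a c x :=
  ⟨fun hx => eq_graphPoint_of_mem hx fun _ _ => rfl, fun hx => hx ▸ graphPoint_mem⟩

lemma isFreeVars_graphSet : IsFreeVars (graphSet J a c) J := fun v =>
  ⟨graphPoint J a c v, ⟨graphPoint_mem, fun _ hj => graphPoint_of_mem hj⟩,
    fun _ ⟨hx, hxv⟩ => eq_graphPoint_of_mem hx hxv⟩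

lemma sum_mul_single_one {i j : Fin n} (hj : j ∈ J) :
    ∑ m ∈ J, a i m * (Pi.single j 1 : Fin n → k) m = a i j := by
  simp [Pi.single_apply, hj]

lemma graphSet_eq_graphSet_iff :
    graphSet J a c = graphSet J a' c' ↔ ∀ i ∉ J, (∀ j ∈ J, a i j = a' i j) ∧ c i = c' i := by
  constructor
  · intro h i hi
    have key : ∀ v : Fin n → k,
        ∑ j ∈ J, a i j * v j + c i = ∑ j ∈ J, a' i j * v j + c' i := fun v => by
      have hv : graphPoint J a c v = graphPoint J a' c' v :=
        eq_graphPoint_of_mem (h ▸ graphPoint_mem) fun _ hj => graphPoint_of_mem hj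
      simpa only [graphPoint_of_notMem hi, neg_inj] using congr_fun hv i
    have hc : c i = c' i := by simpa using key 0
    refine ⟨fun j hj => ?_, hc⟩
    simpa [sum_mul_single_one hj, hc] using key (Pi.single j 1)
  · intro h
    ext x
    refine forall₂_congr fun i hi => ?_
    rw [(h i hi).2, sum_congr rfl fun j hj => by rw [(h i hi).1 j hj]]

lemma isFreeVars_graphSet_insert_erase {i j : Fin n} (hi : i ∉ J) (hj : j ∈ J) (hij : a i j ≠ 0) :
    IsFreeVars (graphSet J a c) (insert i (J.erase j)) := by
  intro v
  have split : ∀ y : Fin n → k, (∀ m ∈ J.erase j, y m = v m) →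
      ∑ m ∈ J, a i m * y m = a i j * y j + ∑ m ∈ J.erase j, a i m * v m := fun y hy => by
    rw [← add_sum_erase J _ hj, sum_congr rfl fun m hm => by rw [hy m hm]]
  set t := -(v i + ∑ m ∈ J.erase j, a i m * v m + c i) / a i j with ht
  have update_eq : ∀ m ∈ J.erase j, Function.update v j t m = v m := fun m hm =>
    Function.update_of_ne (ne_of_mem_erase hm) _ _
  refine ⟨graphPoint J a c (Function.update v j t), ⟨graphPoint_mem, ?_⟩, ?_⟩
  · intro m hm
    rcases mem_insert.mp hm with rfl | hm
    · rw [graphPoint_of_notMem hi, split _ update_eq, Function.update_self, ht]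
      field_simp
      ring
    · rw [graphPoint_of_mem (mem_of_mem_erase hm), update_eq m hm]
  · rintro y ⟨hy, hyv⟩
    refine eq_graphPoint_of_mem hy fun m hm => ?_
    obtain rfl | hmj := eq_or_ne m j
    · have hyi := hy i hi
      rw [split y fun m hm => hyv m (mem_insert_of_mem hm), hyv i (mem_insert_self _ _)] at hyi
      rw [Function.update_self, ht, eq_div_iff hij]
      linear_combination hyi
    · rw [Function.update_of_ne hmj, hyv m (mem_insert_of_mem (mem_erase.mpr ⟨hmj, hm⟩))]

lemma isMinFreeVars_graphSet_iff :
    IsMinFreeVars (graphSet J a c) J ↔ ∀ i ∉ J, ∀ j ∈ J, i < j → a i j = 0 := by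
  refine ⟨fun h i hi j hj hij => ?_, fun h => ⟨isFreeVars_graphSet, fun j hj i hi hij hfree => ?_⟩⟩
  · by_contra hne
    exact h.2 j hj i hi hij (isFreeVars_graphSet_insert_erase hi hj hne)
  · have hagree : ∀ m ∈ insert i (J.erase j),
        graphPoint J a c (Pi.single j 1) m = graphPoint J a c 0 m := by
      intro m hm
      rcases mem_insert.mp hm with rfl | hm
      · simp [graphPoint_of_notMem hi, sum_mul_single_one hj, h m hi j hj hij]
      · simp [graphPoint_of_mem (mem_of_mem_erase hm), ne_of_mem_erase hm]
    have heq := (hfree (graphPoint J a c 0)).unique ⟨graphPoint_mem, hagree⟩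
      ⟨graphPoint_mem, fun _ _ => rfl⟩
    simpa [graphPoint_of_mem hj] using congr_fun heq j

end Graph

section Affine

variable {J : Finset (Fin n)}

def graphSubspace (J : Finset (Fin n)) (a : Fin n → Fin n → k) (c : Fin n → k) :
    AffineSubspace k (Fin n → k) where
  carrier := graphSet J a c
  smul_vsub_vadd_mem' t x y z hx hy hz i hi := by
    have hsum : ∑ j ∈ J, a i j * (t * (x j - y j) + z j) =
        t * ∑ j ∈ J, a i j * x j - t * ∑ j ∈ J, a i j * y j + ∑ j ∈ J, a i j * z j := by
      rw [mul_sum, mul_sum, ← sum_sub_distrib, ← sum_add_distrib]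
      exact sum_congr rfl fun _ _ => by ring
    simp only [vsub_eq_sub, vadd_eq_add, Pi.add_apply, Pi.smul_apply, Pi.sub_apply, smul_eq_mul,
      hsum]
    linear_combination t * hx i hi - t * hy i hi + hz i hi

lemma finrank_direction_eq_card_of_isFreeVars {S : AffineSubspace k (Fin n → k)}
    (h : IsFreeVars (S : Set (Fin n → k)) J) : Module.finrank k S.direction = #J := by
  obtain ⟨p, ⟨hp, -⟩, -⟩ := h 0
  let ρ : S.direction →ₗ[k] (J → k) :=
    (LinearMap.funLeft k k Subtype.val).comp S.direction.subtype
  have hρ : Function.Bijective ρ := by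
    refine ⟨(injective_iff_map_eq_zero ρ).mpr fun w hw => ?_, fun u => ?_⟩
    · have hwp : (w : Fin n → k) +ᵥ p = p := (h p).unique
        ⟨S.vadd_mem_of_mem_direction w.2 hp,
          fun j hj => by simpa [ρ, LinearMap.funLeft] using congr_fun hw ⟨j, hj⟩⟩
        ⟨hp, fun _ _ => rfl⟩
      simpa using hwp
    · obtain ⟨x, ⟨hx, hxu⟩, -⟩ := h fun i => if hi : i ∈ J then u ⟨i, hi⟩ + p i else 0
      refine ⟨⟨x -ᵥ p, S.vsub_mem_direction hx hp⟩, funext fun j => ?_⟩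
      simp [ρ, LinearMap.funLeft, hxu j j.2]
  rw [(LinearEquiv.ofBijective ρ hρ).finrank_eq]
  simp

lemma isAffineDPlane_graphSet {d : ℕ} (hJ : #J = d) (a : Fin n → Fin n → k) (c : Fin n → k) :
    IsAffineDPlane d (graphSet J a c) :=
  ⟨graphSubspace J a c, rfl, ⟨_, graphPoint_mem (v := 0)⟩,
    hJ ▸ finrank_direction_eq_card_of_isFreeVars isFreeVars_graphSet⟩

lemma exists_eq_graphSet_of_isFreeVars {S : AffineSubspace k (Fin n → k)}
    (h : IsFreeVars (S : Set (Fin n → k)) J) :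
    ∃ a c, (S : Set (Fin n → k)) = graphSet J a c := by
  choose g hgS hgJ using fun v => (h v).exists
  set a : Fin n → Fin n → k := fun i j => g 0 i - g (Pi.single j 1) i
  set c : Fin n → k := fun i => -g 0 i
  -- `graphPoint J a c v` is the affine combination `g 0 + ∑ⱼ vⱼ • (g eⱼ - g 0)` of points of `S`
  have graphPoint_mem_S : ∀ v, graphPoint J a c v ∈ S := fun v => by
    have hdir : ∑ j ∈ J, v j • (g (Pi.single j 1) - g 0) ∈ S.direction :=
      Submodule.sum_mem _ fun j _ => Submodule.smul_mem _ _ (S.vsub_mem_direction (hgS _) (hgS _))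
    convert S.vadd_mem_of_mem_direction hdir (hgS 0) using 1
    funext i
    by_cases hi : i ∈ J
    · simp [graphPoint_of_mem hi, hgJ _ i hi, Pi.single_apply, hi]
    · have hsum : ∑ j ∈ J, a i j * v j = -∑ j ∈ J, v j * (g (Pi.single j 1) i - g 0 i) := by
        rw [← sum_neg_distrib]
        exact sum_congr rfl fun _ _ => by ring
      simp only [graphPoint_of_notMem hi, hsum, c, vadd_eq_add, Pi.add_apply, Finset.sum_apply,
        Pi.smul_apply, Pi.sub_apply, smul_eq_mul]
      ring
  refine ⟨a, c, Set.ext fun x => ⟨fun hx => ?_, fun hx => ?_⟩⟩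
  · rw [mem_graphSet_iff_eq_graphPoint]
    exact (h x).unique ⟨hx, fun _ _ => rfl⟩ ⟨graphPoint_mem_S x, fun _ hj => graphPoint_of_mem hj⟩
  · rw [mem_graphSet_iff_eq_graphPoint] at hx
    exact hx ▸ graphPoint_mem_S x

end Affine

section NormalForm

variable {J : Finset (Fin n)}

/-- `inl (i, j)` indexes the coefficient `b_{i,j}` and `inr i` the constant `c_i`. -/
abbrev NormalFormParam (J : Finset (Fin n)) : Type :=
  {p : Fin n × Fin n // p.1 ∉ J ∧ p.2 ∈ J ∧ p.2 < p.1} ⊕ {i : Fin n // i ∉ J}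

lemma card_normalFormParam (J : Finset (Fin n)) :
    Fintype.card (NormalFormParam J) = (∑ i ∈ Jᶜ, #(J.filter (· < i))) + (n - #J) := by
  rw [Fintype.card_sum]
  congr 1
  · rw [Fintype.card_subtype, card_filter, ← univ_product_univ, sum_product, ← sum_add_sum_compl J]
    simp only [sum_boole, Nat.cast_id]
    rw [sum_eq_zero fun i hi => by simp [hi], zero_add]
    refine sum_congr rfl fun i hi => congrArg card ?_
    ext j
    simp [mem_compl.mp hi]
  · simp [Fintype.card_subtype_compl]

def normalFormCoeff (f : NormalFormParam J → k) (i j : Fin n) : k :=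
  if h : i ∉ J ∧ j ∈ J ∧ j < i then f (.inl ⟨(i, j), h⟩) else 0

def normalFormConst (f : NormalFormParam J → k) (i : Fin n) : k :=
  if h : i ∉ J then f (.inr ⟨i, h⟩) else 0

def normalFormPlane (J : Finset (Fin n)) (f : NormalFormParam J → k) : Set (Fin n → k) :=
  graphSet J (normalFormCoeff f) (normalFormConst f)

lemma isMinFreeVars_normalFormPlane (f : NormalFormParam J → k) :
    IsMinFreeVars (normalFormPlane J f) J :=
  isMinFreeVars_graphSet_iff.mpr fun _ _ _ _ hij => dif_neg fun h => h.2.2.asymm hij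

lemma normalFormPlane_injective : Function.Injective (normalFormPlane (k := k) J) := by
  intro f f' h
  have hcoeff := graphSet_eq_graphSet_iff.mp h
  funext p
  rcases p with ⟨⟨i, j⟩, hi, hj, hji⟩ | ⟨i, hi⟩
  · simpa [normalFormCoeff, hi, hj, hji] using (hcoeff i hi).1 j hj
  · simpa [normalFormConst, hi] using (hcoeff i hi).2

lemma exists_normalFormPlane_eq {S : AffineSubspace k (Fin n → k)}
    (h : IsMinFreeVars (S : Set (Fin n → k)) J) :
    ∃ f, normalFormPlane J f = (S : Set (Fin n → k)) := by
  obtain ⟨a, c, hS⟩ := exists_eq_graphSet_of_isFreeVars h.1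
  rw [hS, isMinFreeVars_graphSet_iff] at h
  refine ⟨Sum.elim (fun p => a p.1.1 p.1.2) (fun i => c i),
    hS ▸ graphSet_eq_graphSet_iff.mpr fun i hi => ⟨fun j hj => ?_, dif_pos hi⟩⟩
  rcases lt_or_gt_of_ne (ne_of_mem_of_not_mem hj hi) with hji | hij
  · exact dif_pos ⟨hi, hj, hji⟩
  · rw [h i hi j hj hij]
    exact dif_neg fun h' => h'.2.2.asymm hij

end NormalForm

end

/-- The stratum `X(J,n)` of affine `d`-planes in `kⁿ` with minimal free variables
`{X_j : j ∈ J}` is in bijection with `k^{r(J)+n−d}`, where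
`r(J) = Σ_{i ∉ J} #{j ∈ J : j < i}`. -/
theorem stratum_equiv_affine_space {k : Type*} [Field k] {n d : ℕ} (J : Finset (Fin n))
    (hJ : J.card = d) :
    Nonempty
      ({A' : Set (Fin n → k) // IsAffineDPlane d A' ∧ IsMinFreeVars A' J} ≃
        (Fin ((∑ i ∈ Jᶜ, (J.filter (fun j => j < i)).card) + (n - d)) → k)) := by
  let F : (NormalFormParam J → k) → {A' // IsAffineDPlane d A' ∧ IsMinFreeVars A' J} :=
    fun f => ⟨normalFormPlane J f, isAffineDPlane_graphSet hJ _ _, isMinFreeVars_normalFormPlane f⟩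
  have hF : Function.Bijective F := by
    refine ⟨fun f f' h => normalFormPlane_injective (congrArg Subtype.val h), ?_⟩
    rintro ⟨A', ⟨S, rfl, -⟩, hmin⟩
    obtain ⟨f, hf⟩ := exists_normalFormPlane_eq hmin
    exact ⟨f, Subtype.ext hf⟩
  have hcard : Fintype.card (NormalFormParam J) = (∑ i ∈ Jᶜ, #(J.filter (· < i))) + (n - d) :=
    hJ ▸ card_normalFormParam J
  exact ⟨(Equiv.ofBijective F hF).symm.trans
    (Equiv.arrowCongr (Fintype.equivFinOfCardEq hcard) (Equiv.refl k))⟩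
end

section
/- Let δ, δ′ ∈ 𝔻̄ₙ, i.e., standard sets in ℕⁿ not containing the full axis ℕe₁. Define δ + δ′ = {β ∈ ℕⁿ : p(β) ∈ p(δ) ∪ p(δ′) and β₁ < #(p⁻¹(p(β)) ∩ δ) + #(p⁻¹(p(β)) ∩ δ′)}, where p : ℕⁿ → ℕⁿ⁻¹ drops the first coordinate. Then δ + δ′ is again an element of 𝔻̄ₙ. -/
/-- A *standard set*: a subset of `ℕⁿ` whose complement is stable under addition. -/
def IsStandardSet {σ : Type*} (δ : Set (σ → ℕ)) : Prop :=
  ∀ α ∉ δ, ∀ β : σ → ℕ, α + β ∉ δ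

/-- `δ ⊆ ℕⁿ` does not contain the full first coordinate axis `ℕe₁`. -/
def NoFirstAxis {n : ℕ} (δ : Set (Fin (n + 1) → ℕ)) : Prop :=
  ¬ ∀ c : ℕ, Pi.single (0 : Fin (n + 1)) c ∈ δ

/-- Addition of standard sets:
`δ + δ′ = {β : p β ∈ p(δ) ∪ p(δ′), β₁ < #(p⁻¹(p β) ∩ δ) + #(p⁻¹(p β) ∩ δ′)}`,
where `p` drops the first coordinate. -/
def addStd {n : ℕ} (δ δ' : Set (Fin (n + 1) → ℕ)) : Set (Fin (n + 1) → ℕ) :=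
  {β | (β ∘ Fin.succ ∈ (fun x => x ∘ Fin.succ) '' δ ∪ (fun x => x ∘ Fin.succ) '' δ') ∧
    β 0 < {x ∈ δ | x ∘ Fin.succ = β ∘ Fin.succ}.ncard +
      {x ∈ δ' | x ∘ Fin.succ = β ∘ Fin.succ}.ncard}

/-!
Write `p` for `Fin.tail`. Membership of `β` in `δ + δ′` only depends on whether `β 0` is smaller
than `φ (p β) = #(p⁻¹(p β) ∩ δ) + #(p⁻¹(p β) ∩ δ′)`, because a nonzero count forces
`p β ∈ p(δ) ∪ p(δ′)`. Every set `{β | β 0 < φ (p β)}` misses the point `φ 0 • e₁` of the axis,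
and it is standard as soon as `φ` is antitone. The fibre counts of a standard set `δ` are
antitone thanks to the injection `x ↦ (x 0, γ)` of `p⁻¹(γ') ∩ δ` into `p⁻¹(γ) ∩ δ` for `γ ≤ γ'`;
this needs the fibres to be finite, which is where `ℕe₁ ⊄ δ` enters.
-/

lemma IsStandardSet.mem_of_le {σ : Type*} {δ : Set (σ → ℕ)} (h : IsStandardSet δ)
    {α β : σ → ℕ} (hβ : β ∈ δ) (hle : α ≤ β) : α ∈ δ := by
  by_contra hα
  exact h α hα (β - α) (by rwa [add_tsub_cancel_of_le hle])

section TailFiber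

variable {n : ℕ}

/-- The fibre `p⁻¹(γ) ∩ δ` of the projection `p` dropping the first coordinate. -/
def tailFiber (δ : Set (Fin (n + 1) → ℕ)) (γ : Fin n → ℕ) : Set (Fin (n + 1) → ℕ) :=
  {x ∈ δ | x ∘ Fin.succ = γ}

lemma eq_cons_of_mem_tailFiber {δ : Set (Fin (n + 1) → ℕ)} {γ : Fin n → ℕ}
    {x : Fin (n + 1) → ℕ} (hx : x ∈ tailFiber δ γ) : x = Fin.cons (x 0) γ := by
  rw [← hx.2]
  exact (Fin.cons_self_tail x).symm

lemma tailFiber_subset_image_Iio {δ : Set (Fin (n + 1) → ℕ)} (h : IsStandardSet δ) {c : ℕ}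
    (hc : Pi.single 0 c ∉ δ) (γ : Fin n → ℕ) :
    tailFiber δ γ ⊆ (fun k => Fin.cons k γ) '' Set.Iio c := by
  intro x hx
  refine ⟨x 0, ?_, (eq_cons_of_mem_tailFiber hx).symm⟩
  by_contra! hcx
  refine hc (h.mem_of_le hx.1 fun i => ?_)
  rcases eq_or_ne i 0 with rfl | hi
  · simpa using hcx
  · simp [hi]

lemma tailFiber_finite {δ : Set (Fin (n + 1) → ℕ)} (h : IsStandardSet δ) (hb : NoFirstAxis δ)
    (γ : Fin n → ℕ) : (tailFiber δ γ).Finite := by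
  obtain ⟨c, hc⟩ := not_forall.mp hb
  exact ((Set.finite_Iio c).image _).subset (tailFiber_subset_image_Iio h hc γ)

lemma ncard_tailFiber_antitone {δ : Set (Fin (n + 1) → ℕ)} (h : IsStandardSet δ)
    (hb : NoFirstAxis δ) : Antitone fun γ => (tailFiber δ γ).ncard := by
  intro γ γ' hle
  refine Set.ncard_le_ncard_of_injOn (fun x => Fin.cons (x 0) γ) ?_ ?_ (tailFiber_finite h hb γ)
  · intro x hx
    refine ⟨h.mem_of_le hx.1 ?_, funext fun _ => Fin.cons_succ ..⟩
    rw [eq_cons_of_mem_tailFiber hx, Fin.cons_le_cons]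
    exact ⟨le_rfl, hle⟩
  · intro x hx y hy hxy
    rw [eq_cons_of_mem_tailFiber hx, eq_cons_of_mem_tailFiber hy, (Fin.cons_inj.mp hxy).1]

lemma mem_addStd_iff {δ δ' : Set (Fin (n + 1) → ℕ)} {β : Fin (n + 1) → ℕ} :
    β ∈ addStd δ δ' ↔
      β 0 < (tailFiber δ (β ∘ Fin.succ)).ncard + (tailFiber δ' (β ∘ Fin.succ)).ncard := by
  refine ⟨And.right, fun hlt => ⟨?_, hlt⟩⟩
  have hne : (tailFiber δ (β ∘ Fin.succ)).Nonempty ∨ (tailFiber δ' (β ∘ Fin.succ)).Nonempty := by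
    by_contra! h
    simp [h.1, h.2] at hlt
  rcases hne with ⟨x, hx⟩ | ⟨x, hx⟩
  exacts [Or.inl ⟨x, hx⟩, Or.inr ⟨x, hx⟩]

lemma isStandardSet_setOf_lt_of_antitone {φ : (Fin n → ℕ) → ℕ} (hφ : Antitone φ) :
    IsStandardSet {β : Fin (n + 1) → ℕ | β 0 < φ (β ∘ Fin.succ)} := by
  intro α hα β hαβ
  have hle : φ ((α + β) ∘ Fin.succ) ≤ φ (α ∘ Fin.succ) := hφ fun _ => Nat.le_add_right _ _
  simp only [Set.mem_ofPred_eq, not_lt, Pi.add_apply] at hα hαβ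
  omega

lemma noFirstAxis_setOf_lt (φ : (Fin n → ℕ) → ℕ) :
    NoFirstAxis {β : Fin (n + 1) → ℕ | β 0 < φ (β ∘ Fin.succ)} := by
  intro hall
  have hφ := hall (φ 0)
  simp only [Set.mem_ofPred_eq, Pi.single_eq_same] at hφ
  rw [show (Pi.single 0 (φ 0) : Fin (n + 1) → ℕ) ∘ Fin.succ = 0 from
    funext fun j => Pi.single_eq_of_ne (Fin.succ_ne_zero j) _] at hφ
  exact lt_irrefl _ hφ

end TailFiber

/-- The sum of two standard sets not containing the axis `ℕe₁` is again a standard set not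
containing the axis `ℕe₁`. -/
theorem addStd_mem_Dbar {n : ℕ} (δ δ' : Set (Fin (n + 1) → ℕ))
    (hδ : IsStandardSet δ) (hδ' : IsStandardSet δ')
    (hb : NoFirstAxis δ) (hb' : NoFirstAxis δ') :
    IsStandardSet (addStd δ δ') ∧ NoFirstAxis (addStd δ δ') := by
  let φ : (Fin n → ℕ) → ℕ := fun γ => (tailFiber δ γ).ncard + (tailFiber δ' γ).ncard
  have hφ : Antitone φ := (ncard_tailFiber_antitone hδ hb).add (ncard_tailFiber_antitone hδ' hb')
  have hsum : addStd δ δ' = {β | β 0 < φ (β ∘ Fin.succ)} := Set.ext fun _ => mem_addStd_iff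
  rw [hsum]
  exact ⟨isStandardSet_setOf_lt_of_antitone hφ, noFirstAxis_setOf_lt φ⟩
end

section
/- Let A ⊆ 𝔸ⁿ be a union of m pairwise distinct affine hyperplanes (i.e., d = n−1), where for each i ∈ {1,…,n} exactly m_i components have minimal free variables {X_j : j ≠ i} (so Σ m_i = m). Then with respect to any term order with X₁ < … < Xₙ, the standard set of the vanishing ideal I(A) equals ⋃_{i=1}^{n} ⋃_{ℓ=0}^{m_i−1} (ℓ·e_i + ⊕_{j ≠ i} ℕe_j). -/
/-!
The vanishing ideal of the union is principal, generated by the product `F` of the monic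
equations `L_ℓ = X_{i_ℓ} + (terms in smaller variables)`. Each `L_ℓ` is prime, being the kernel
of the substitution `X_{i_ℓ} ↦ X_{i_ℓ} - L_ℓ`; a polynomial vanishing on the hyperplane of `L_ℓ`
is killed by that substitution, hence (as `k` is infinite) divisible by `L_ℓ`; and distinct
hyperplanes have non-associated equations. As `X_{i_ℓ}` leads `L_ℓ`, the leading exponent of `F`
is `μ = ∑ m_i e_i`, so the leading exponents of `I(A)` are exactly the exponents `≥ μ`.
-/

open MvPolynomial

section LeadingExponent

variable {σ k : Type*} (m : MonomialOrder σ)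

theorem isLeadExp_iff [CommSemiring k] {f : MvPolynomial σ k} {β : σ →₀ ℕ} :
    IsLeadExp m f β ↔ f ≠ 0 ∧ m.degree f = β := by
  constructor
  · rintro ⟨hβ, hmax⟩
    have hf : f ≠ 0 := by rintro rfl; simp at hβ
    refine ⟨hf, by_contra fun hne => ?_⟩
    exact (m.le_degree hβ).not_gt (hmax _ (m.degree_mem_support hf) hne)
  · rintro ⟨hf, rfl⟩
    exact ⟨m.degree_mem_support hf, fun α hα hne =>
      (m.le_degree hα).lt_of_ne (m.toSyn.injective.ne hne)⟩

theorem expC_span_singleton [CommRing k] [IsDomain k] {F : MvPolynomial σ k} (hF : F ≠ 0) :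
    expC m (Ideal.span {F}) = {β | m.degree F ≤ β} := by
  ext β
  simp only [expC, isLeadExp_iff, Ideal.mem_span_singleton', Set.mem_ofPred_eq]
  constructor
  · rintro ⟨_, ⟨g, rfl⟩, hgF, rfl⟩
    rw [m.degree_mul (left_ne_zero_of_mul hgF) hF]
    exact le_add_self
  · intro hβ
    have hmon : monomial (β - m.degree F) (1 : k) ≠ 0 := by simp
    refine ⟨_, ⟨monomial (β - m.degree F) 1, rfl⟩, mul_ne_zero hmon hF, ?_⟩
    classical
    rw [m.degree_mul hmon hF, m.degree_monomial, if_neg one_ne_zero, tsub_add_cancel_of_le hβ]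

end LeadingExponent

section AffineHyperplane

variable {σ k : Type*} {i : σ}

theorem X_add_ne_zero [CommRing k] [Nontrivial k] {q : MvPolynomial σ k} (hq : i ∉ q.vars) :
    X i + q ≠ 0 := by
  intro h
  rw [add_eq_zero_iff_neg_eq] at h
  simp [← h, vars_neg, vars_X] at hq

variable [DecidableEq σ]

theorem aeval_update_of_notMem_vars {S : Type*} [CommSemiring k] [CommSemiring S] [Algebra k S]
    {q : MvPolynomial σ k} (hq : i ∉ q.vars) (x : σ → S) (a : S) :
    aeval (Function.update x i a) q = aeval x q := by
  refine hom_congr_vars (f₁ := (aeval _).toRingHom) (by ext; simp) (fun j hj _ => ?_) rfl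
  have hji : j ≠ i := fun h => hq (h ▸ hj)
  simp [Function.update_of_ne hji]

variable [CommRing k] {q : MvPolynomial σ k}

theorem X_add_dvd_sub_aeval_update (f : MvPolynomial σ k) :
    X i + q ∣ f - aeval (Function.update X i (-q)) f := by
  induction f using MvPolynomial.induction_on with
  | C a => simp
  | add f g hf hg => simpa [add_sub_add_comm] using dvd_add hf hg
  | mul_X f j hf =>
    have hXj : X i + q ∣ X j - Function.update (X : σ → MvPolynomial σ k) i (-q) j := by
      rcases eq_or_ne j i with rfl | hj
      · simp
      · simp [Function.update_of_ne hj]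
    have hsplit : f * X j - aeval (Function.update X i (-q)) (f * X j) =
        (f - aeval (Function.update X i (-q)) f) * X j +
          aeval (Function.update X i (-q)) f * (X j - Function.update X i (-q) j) := by
      simp only [map_mul, aeval_X]; ring
    rw [hsplit]
    exact dvd_add (hf.mul_right _) (hXj.mul_left _)

theorem ker_aeval_update_X (hq : i ∉ q.vars) :
    RingHom.ker (aeval (R := k) (Function.update X i (-q))) = Ideal.span {X i + q} := by
  refine le_antisymm (fun f hf => ?_) ?_
  · have := X_add_dvd_sub_aeval_update (i := i) (q := q) f
    rwa [RingHom.mem_ker.mp hf, sub_zero, ← Ideal.mem_span_singleton] at this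
  · rw [Ideal.span_le, Set.singleton_subset_iff, SetLike.mem_coe, RingHom.mem_ker]
    rw [map_add, aeval_X, Function.update_self, aeval_update_of_notMem_vars hq,
      aeval_X_left_apply, neg_add_cancel]

theorem prime_X_add [IsDomain k] (hq : i ∉ q.vars) : Prime (X i + q) := by
  rw [← Ideal.span_singleton_prime (X_add_ne_zero hq), ← ker_aeval_update_X hq]
  exact RingHom.ker_isPrime _

theorem X_add_dvd_of_forall_eval_eq_zero [IsDomain k] [Infinite k] (hq : i ∉ q.vars)
    {f : MvPolynomial σ k} (hf : ∀ x, eval x (X i + q) = 0 → eval x f = 0) : X i + q ∣ f := by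
  suffices hzero : aeval (Function.update X i (-q)) f = 0 by
    simpa only [hzero, sub_zero] using X_add_dvd_sub_aeval_update (i := i) (q := q) f
  refine MvPolynomial.funext fun x => ?_
  rw [map_zero, ← aeval_eq_eval, comp_aeval_apply]
  have hpt : (fun j => aeval x (Function.update X i (-q) j)) =
      Function.update x i (-eval x q) := by
    ext j
    rcases eq_or_ne j i with rfl | hj
    · simp
    · simp [Function.update_of_ne hj]
  rw [hpt, aeval_eq_eval]
  refine hf _ ?_
  rw [map_add, eval_X, Function.update_self, ← aeval_eq_eval, ← aeval_eq_eval,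
    aeval_update_of_notMem_vars hq, neg_add_cancel]

end AffineHyperplane

theorem vanishingIdeal_iUnion_eq_span_prod {σ k ι : Type*} [Field k] [Fintype ι]
    (L : ι → MvPolynomial σ k) (hprime : ∀ ℓ, Prime (L ℓ))
    (hassoc : Pairwise fun ℓ ℓ' => ¬ Associated (L ℓ) (L ℓ'))
    (hdvd : ∀ ℓ f, (∀ x, eval x (L ℓ) = 0 → eval x f = 0) → L ℓ ∣ f) :
    vanishingIdeal k (⋃ ℓ, {x | eval x (L ℓ) = 0}) = Ideal.span {∏ ℓ, L ℓ} := by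
  ext f
  rw [Ideal.mem_span_singleton, mem_vanishingIdeal_iff]
  constructor
  · intro hf
    refine Fintype.prod_dvd_of_isRelPrime (fun ℓ ℓ' hne => ?_)
      fun ℓ => hdvd ℓ f fun x hx => hf x (Set.mem_iUnion.mpr ⟨ℓ, hx⟩)
    exact (hprime ℓ).irreducible.isRelPrime_iff_not_dvd.mpr
      fun hd => hassoc hne ((hprime ℓ).associated_of_dvd (hprime ℓ') hd)
  · rintro ⟨g, rfl⟩ x hx
    obtain ⟨ℓ, hℓ⟩ := Set.mem_iUnion.mp hx
    rw [map_mul, map_prod, Finset.prod_eq_zero (Finset.mem_univ ℓ) (by exact hℓ), zero_mul]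

open scoped MonomialOrder

section LowerTerms

variable {k : Type*} [Field k] {n : ℕ}

noncomputable def lowerTerms (i : Fin n) (b : Fin n → k) (c : k) : MvPolynomial (Fin n) k :=
  ∑ j ∈ Finset.univ.filter (fun j => j < i), C (b j) * X j + C c

theorem eval_lowerTerms (i : Fin n) (b : Fin n → k) (c : k) (x : Fin n → k) :
    eval x (lowerTerms i b c) = ∑ j ∈ Finset.univ.filter (fun j => j < i), b j * x j + c := by
  simp [lowerTerms]

theorem mem_support_lowerTerms {i : Fin n} {b : Fin n → k} {c : k} {α : Fin n →₀ ℕ}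
    (hα : α ∈ (lowerTerms i b c).support) : α = 0 ∨ ∃ j < i, α = Finsupp.single j 1 := by
  classical
  rcases Finset.mem_union.mp (support_add hα) with hα | hα
  · obtain ⟨j, hj, hαj⟩ := Finset.mem_biUnion.mp (support_sum hα)
    rw [C_mul_X_eq_monomial] at hαj
    exact Or.inr ⟨j, (Finset.mem_filter.mp hj).2,
      Finset.mem_singleton.mp (support_monomial_subset hαj)⟩
  · rw [C_apply] at hα
    exact Or.inl (Finset.mem_singleton.mp (support_monomial_subset hα))

theorem notMem_vars_lowerTerms (i : Fin n) (b : Fin n → k) (c : k) :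
    i ∉ (lowerTerms i b c).vars := by
  intro hi
  obtain ⟨α, hα, hiα⟩ := (mem_vars_iff_mem_support i).mp hi
  rcases mem_support_lowerTerms hα with rfl | ⟨j, hj, rfl⟩
  · simp at hiα
  · exact hj.ne' (Finsupp.mem_support_single _ _ _ |>.mp hiα).1

variable (m : MonomialOrder (Fin n))

theorem degree_lowerTerms_lt (hvar : StrictMono fun i : Fin n => m.toSyn (Finsupp.single i 1))
    (i : Fin n) (b : Fin n → k) (c : k) :
    m.degree (lowerTerms i b c) ≺[m] Finsupp.single i 1 := by
  have hpos : 0 ≺[m] Finsupp.single i 1 := by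
    rw [map_zero, MonomialOrder.toSyn_lt_iff_ne_zero, ne_eq, m.toSyn_eq_zero_iff]
    exact Finsupp.single_ne_zero.mpr one_ne_zero
  rw [m.degree_lt_iff hpos]
  intro α hα
  rcases mem_support_lowerTerms hα with rfl | ⟨j, hj, rfl⟩
  exacts [hpos, hvar hj]

theorem degree_X_add_lowerTerms (hvar : StrictMono fun i : Fin n => m.toSyn (Finsupp.single i 1))
    (i : Fin n) (b : Fin n → k) (c : k) :
    m.degree (X i + lowerTerms i b c) = Finsupp.single i 1 := by
  rw [m.degree_add_of_lt (m.degree_X (R := k) ▸ degree_lowerTerms_lt m hvar i b c), m.degree_X]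

theorem monic_X_add_lowerTerms (hvar : StrictMono fun i : Fin n => m.toSyn (Finsupp.single i 1))
    (i : Fin n) (b : Fin n → k) (c : k) :
    m.Monic (X i + lowerTerms i b c) :=
  m.monic_X.add_of_lt (m.degree_X (R := k) ▸ degree_lowerTerms_lt m hvar i b c)

theorem X_add_lowerTerms_eq_of_associated
    (hvar : StrictMono fun i : Fin n => m.toSyn (Finsupp.single i 1))
    {i i' : Fin n} {b b' : Fin n → k} {c c' : k}
    (h : Associated (X i + lowerTerms i b c) (X i' + lowerTerms i' b' c')) :
    X i + lowerTerms i b c = X i' + lowerTerms i' b' c' := by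
  obtain ⟨u, hu⟩ := h
  obtain ⟨r, -, hr⟩ := isUnit_iff_eq_C_of_isReduced.mp u.isUnit
  have hr1 := (monic_X_add_lowerTerms m hvar i' b' c').leadingCoeff_eq_one
  rw [← hu, m.leadingCoeff_mul, (monic_X_add_lowerTerms m hvar i b c).leadingCoeff_eq_one,
    one_mul, hr, m.leadingCoeff_C] at hr1
  rwa [hr, hr1, map_one, mul_one] at hu

end LowerTerms

theorem expD_union_hyperplanes_general {k : Type*} [Field k] [Infinite k] {n : ℕ} {mm : ℕ}
    (m : MonomialOrder (Fin n))
    (hvar : ∀ i j : Fin n, i < j →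
      m.toSyn (Finsupp.single i 1) < m.toSyn (Finsupp.single j 1))
    (idx : Fin mm → Fin n) (b : Fin mm → Fin n → k) (c : Fin mm → k)
    (H : Fin mm → Set (Fin n → k))
    (hH : ∀ ℓ : Fin mm, H ℓ = {x : Fin n → k |
      x (idx ℓ) + ∑ j ∈ Finset.univ.filter (fun j => j < idx ℓ), b ℓ j * x j + c ℓ = 0})
    (hdist : ∀ ℓ ℓ' : Fin mm, H ℓ = H ℓ' → ℓ = ℓ') :
    expD m (MvPolynomial.vanishingIdeal k (⋃ ℓ, H ℓ)) =
      ⋃ i : Fin n,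
        ⋃ ℓ ∈ Finset.range ((Finset.univ.filter (fun l => idx l = i)).card),
          {β : Fin n →₀ ℕ | β i = ℓ} := by
  set L : Fin mm → MvPolynomial (Fin n) k := fun ℓ => X (idx ℓ) + lowerTerms (idx ℓ) (b ℓ) (c ℓ)
  have hvars : ∀ ℓ, idx ℓ ∉ (lowerTerms (idx ℓ) (b ℓ) (c ℓ)).vars := fun ℓ =>
    notMem_vars_lowerTerms _ _ _
  have hHL : ∀ ℓ, H ℓ = {x | eval x (L ℓ) = 0} := fun ℓ => by
    simp only [hH, L, map_add, eval_X, eval_lowerTerms, add_assoc]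
  have hassoc : Pairwise fun ℓ ℓ' => ¬ Associated (L ℓ) (L ℓ') := fun ℓ ℓ' hne h => by
    have hLL : L ℓ = L ℓ' := X_add_lowerTerms_eq_of_associated m hvar h
    exact hne (hdist ℓ ℓ' (by rw [hHL, hHL, hLL]))
  have hI : vanishingIdeal k (⋃ ℓ, H ℓ) = Ideal.span {∏ ℓ, L ℓ} := by
    simp only [hHL]
    exact vanishingIdeal_iUnion_eq_span_prod L (fun ℓ => prime_X_add (hvars ℓ)) hassoc
      fun ℓ _ => X_add_dvd_of_forall_eval_eq_zero (hvars ℓ)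
  have hdeg : ∀ i, m.degree (∏ ℓ, L ℓ) i = (Finset.univ.filter (fun l => idx l = i)).card := by
    intro i
    rw [m.degree_prod fun ℓ _ => X_add_ne_zero (hvars ℓ), Finset.sum_apply', Finset.card_filter]
    simp [degree_X_add_lowerTerms m hvar, Finsupp.single_apply]
  have hF : ∏ ℓ, L ℓ ≠ 0 := Finset.prod_ne_zero_iff.mpr fun ℓ _ => X_add_ne_zero (hvars ℓ)
  rw [expD, hI, expC_span_singleton m hF]
  ext β
  simp [Finsupp.le_def, hdeg]

/-- Standard set of a union of `m` pairwise distinct affine hyperplanes in `𝔸ⁿ`: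
if `m_i` components have leading variable `X_i` (minimal free variables `{X_j : j ≠ i}`),
then `D(I(A)) = ⋃_{i} ⋃_{ℓ < m_i} (ℓ·e_i + ⊕_{j ≠ i} ℕe_j)`, for any term order with
`X₁ < … < Xₙ`. -/
theorem expD_union_hyperplanes {k : Type*} [Field k] [Infinite k] {n : ℕ} {mm : ℕ}
    (m : MonomialOrder (Fin n))
    (hvar : ∀ i j : Fin n, i < j →
      m.toSyn (Finsupp.single i 1) < m.toSyn (Finsupp.single j 1))
    (idx : Fin mm → Fin n) (b : Fin mm → Fin n → k) (c : Fin mm → k)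
    (hb : ∀ ℓ : Fin mm, ∀ j : Fin n, ¬ j < idx ℓ → b ℓ j = 0)
    (H : Fin mm → Set (Fin n → k))
    (hH : ∀ ℓ : Fin mm, H ℓ = {x : Fin n → k |
      x (idx ℓ) + ∑ j ∈ Finset.univ.filter (fun j => j < idx ℓ), b ℓ j * x j + c ℓ = 0})
    (hdist : ∀ ℓ ℓ' : Fin mm, H ℓ = H ℓ' → ℓ = ℓ') :
    expD m (MvPolynomial.vanishingIdeal k (⋃ ℓ, H ℓ)) =
      ⋃ i : Fin n,
        ⋃ ℓ ∈ Finset.range ((Finset.univ.filter (fun l => idx l = i)).card),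
          {β : Fin n →₀ ℕ | β i = ℓ} :=
  expD_union_hyperplanes_general m hvar idx b c H hH hdist
end

section
/- Let A ⊆ 𝔸ⁿ be a variety whose m irreducible components are linear d-dimensional subspaces of kⁿ, all having the same set of minimal free variables {X_j : j ∈ J}. Then for every J′ ⊆ {1,…,n} with #J′ = d and J′ ≠ J, the set ⊕_{j∈J′} ℕe_j is not contained in D(A); concretely, choosing ℓ ∈ J′ \ J, the product f = ∏_{i=1}^m (X_ℓ + Σ_{j∈J, j<ℓ} b^{(i)}_{ℓ,j} X_j) lies in I(A) and has leading exponent m·e_ℓ ∈ ⊕_{j∈J′} ℕe_j. -/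
open MvPolynomial

/-- The `d`-plane `γ + ⊕_{j∈J} ℕe_j` in `ℕⁿ` (for `γ` vanishing on `J`): the set of
exponents agreeing with `γ` outside `J`. -/
def dPlane {n : ℕ} (γ : Fin n →₀ ℕ) (J : Finset (Fin n)) : Set (Fin n →₀ ℕ) :=
  {β | ∀ i ∉ J, β i = γ i}

/-- The parameters `(J, γ)` of the `d`-planes contained in `δ`. -/
def planesIn {n : ℕ} (d : ℕ) (δ : Set (Fin n →₀ ℕ)) :
    Set (Finset (Fin n) × (Fin n →₀ ℕ)) :=
  {Jγ | Jγ.1.card = d ∧ (∀ j ∈ Jγ.1, Jγ.2 j = 0) ∧ dPlane Jγ.2 Jγ.1 ⊆ δ}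

/-- `E(δ)`: the union of all `d`-planes contained in `δ`. -/
def Eset {n : ℕ} (d : ℕ) (δ : Set (Fin n →₀ ℕ)) : Set (Fin n →₀ ℕ) :=
  ⋃ Jγ ∈ planesIn d δ, dPlane Jγ.2 Jγ.1

namespace IsLeadExp

variable {σ R : Type*} [CommSemiring R] {m : MonomialOrder σ}

theorem iff_degree {f : MvPolynomial σ R} {β : σ →₀ ℕ} :
    IsLeadExp m f β ↔ f ≠ 0 ∧ m.degree f = β := by
  constructor
  · rintro ⟨hβ, hlt⟩
    have hf : f ≠ 0 := by rintro rfl; simp at hβ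
    refine ⟨hf, m.toSyn.injective (le_antisymm ?_ (m.le_degree hβ))⟩
    rw [m.degree_le_iff]
    intro α hα
    rcases eq_or_ne α β with rfl | hne
    · exact le_rfl
    · exact (hlt α hα hne).le
  · rintro ⟨hf, rfl⟩
    refine ⟨m.degree_mem_support hf, fun α hα hne => ?_⟩
    exact (m.le_degree hα).lt_of_ne (m.toSyn.injective.ne hne)

theorem prod [Nontrivial R] [NoZeroDivisors R] {ι : Type*} {s : Finset ι}
    {f : ι → MvPolynomial σ R} {β : ι → σ →₀ ℕ} (h : ∀ i ∈ s, IsLeadExp m (f i) (β i)) :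
    IsLeadExp m (∏ i ∈ s, f i) (∑ i ∈ s, β i) := by
  simp only [iff_degree] at h ⊢
  refine ⟨Finset.prod_ne_zero_iff.mpr fun i hi => (h i hi).1, ?_⟩
  rw [m.degree_prod fun i hi => (h i hi).1]
  exact Finset.sum_congr rfl fun i hi => (h i hi).2

end IsLeadExp

theorem isLeadExp_X_add_sum_C_mul_X {σ R : Type*} [CommSemiring R] [Nontrivial R]
    {m : MonomialOrder σ} {F : Finset σ} {ℓ : σ}
    (hF : ∀ j ∈ F, m.toSyn (Finsupp.single j 1) < m.toSyn (Finsupp.single ℓ 1)) (c : σ → R) :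
    IsLeadExp m (X ℓ + ∑ j ∈ F, C (c j) * X j) (Finsupp.single ℓ 1) := by
  have hpos : (0 : m.syn) < m.toSyn (Finsupp.single ℓ 1) := by
    rw [← m.bot_eq_zero, bot_lt_iff_ne_bot, m.bot_eq_zero, ne_eq,
      AddEquiv.map_eq_zero_iff, Finsupp.single_eq_zero]
    exact one_ne_zero
  have hsum : m.toSyn (m.degree (∑ j ∈ F, C (c j) * X j)) <
      m.toSyn (m.degree (X ℓ : MvPolynomial σ R)) := by
    rw [m.degree_X]
    refine m.degree_sum_le.trans_lt ((Finset.sup_lt_iff hpos).mpr fun j hj => ?_)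
    rw [C_mul_X_eq_monomial]
    exact (m.degree_monomial_le _).trans_lt (hF j hj)
  rw [IsLeadExp.iff_degree, m.degree_add_of_lt hsum, m.degree_X]
  exact ⟨(m.monic_X.add_of_lt hsum).ne_zero, rfl⟩

theorem prod_mem_vanishingIdeal_iUnion {k K σ ι : Type*} [Field k] [Field K] [Algebra k K]
    [Fintype ι] {P : ι → Set (σ → K)} {f : ι → MvPolynomial σ k}
    (h : ∀ i, f i ∈ vanishingIdeal k (P i)) :
    ∏ i, f i ∈ vanishingIdeal k (⋃ i, P i) := by
  rintro x ⟨_, ⟨i, rfl⟩, hx⟩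
  rw [map_prod]
  exact Finset.prod_eq_zero (Finset.mem_univ i) (h i x hx)

theorem single_mem_dPlane_zero {n : ℕ} {J : Finset (Fin n)} {ℓ : Fin n} (hℓ : ℓ ∈ J) (a : ℕ) :
    Finsupp.single ℓ a ∈ dPlane 0 J := fun _ hi =>
  Finsupp.single_eq_of_ne' (ne_of_mem_of_not_mem hℓ hi)

open MvPolynomial in
theorem product_witness_not_parallel_general {k : Type*} [Field k] {n mm : ℕ}
    (m : MonomialOrder (Fin n))
    (hvar : ∀ i j : Fin n, i < j →
      m.toSyn (Finsupp.single i 1) < m.toSyn (Finsupp.single j 1))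
    (J J' : Finset (Fin n))
    (ℓ : Fin n) (hℓ' : ℓ ∈ J') (hℓ : ℓ ∉ J)
    (b : Fin mm → Fin n → Fin n → k)
    (P : Fin mm → Set (Fin n → k))
    (hP : ∀ i : Fin mm, P i = {x : Fin n → k |
      ∀ l ∉ J, x l + ∑ j ∈ J.filter (fun j => j < l), b i l j * x j = 0})
    (A : Set (Fin n → k)) (hA : A = ⋃ i, P i) :
    (∏ i : Fin mm,
        (X ℓ + ∑ j ∈ J.filter (fun j => j < ℓ), C (b i ℓ j) * X j)) ∈
          MvPolynomial.vanishingIdeal k A ∧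
      IsLeadExp m
        (∏ i : Fin mm,
          (X ℓ + ∑ j ∈ J.filter (fun j => j < ℓ), C (b i ℓ j) * X j))
        (Finsupp.single ℓ mm) ∧
      Finsupp.single ℓ mm ∈ expC m (MvPolynomial.vanishingIdeal k A) ∧
      ¬ dPlane 0 J' ⊆ expD m (MvPolynomial.vanishingIdeal k A) := by
  have hlead : IsLeadExp m
      (∏ i : Fin mm, (X ℓ + ∑ j ∈ J.filter (fun j => j < ℓ), C (b i ℓ j) * X j))
      (Finsupp.single ℓ mm) := by
    simpa using IsLeadExp.prod (s := Finset.univ) fun i _ => isLeadExp_X_add_sum_C_mul_X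
      (fun j hj => hvar j ℓ (Finset.mem_filter.mp hj).2) (b i ℓ)
  have hmem : (∏ i : Fin mm,
      (X ℓ + ∑ j ∈ J.filter (fun j => j < ℓ), C (b i ℓ j) * X j)) ∈ vanishingIdeal k A := by
    rw [hA]
    refine prod_mem_vanishingIdeal_iUnion fun i x hx => ?_
    rw [hP i] at hx
    simpa [map_sum] using hx ℓ hℓ
  exact ⟨hmem, hlead, ⟨_, hmem, hlead⟩,
    fun hsub => hsub (single_mem_dPlane_zero hℓ' mm) ⟨_, hmem, hlead⟩⟩

open MvPolynomial in
/-- If all `m` components of `A` are linear `d`-spaces with the same minimal free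
variables `{X_j : j ∈ J}`, then for every `J′ ≠ J` with `#J′ = d` the set `⊕_{j∈J′} ℕe_j`
is not contained in `D(A)`: choosing `ℓ ∈ J′ \ J`, the product
`f = ∏_i (X_ℓ + Σ_{j∈J, j<ℓ} b^{(i)}_{ℓ,j} X_j)` lies in `I(A)` and has leading exponent
`m·e_ℓ ∈ ⊕_{j∈J′} ℕe_j`. -/
theorem product_witness_not_parallel {k : Type*} [Field k] {n d mm : ℕ}
    (m : MonomialOrder (Fin n))
    (hvar : ∀ i j : Fin n, i < j →
      m.toSyn (Finsupp.single i 1) < m.toSyn (Finsupp.single j 1))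
    (J J' : Finset (Fin n)) (hJ : J.card = d) (hJ' : J'.card = d)
    (ℓ : Fin n) (hℓ' : ℓ ∈ J') (hℓ : ℓ ∉ J)
    (b : Fin mm → Fin n → Fin n → k)
    (P : Fin mm → Set (Fin n → k))
    (hP : ∀ i : Fin mm, P i = {x : Fin n → k |
      ∀ l ∉ J, x l + ∑ j ∈ J.filter (fun j => j < l), b i l j * x j = 0})
    (hMin : ∀ i : Fin mm, IsMinFreeVars (P i) J)
    (A : Set (Fin n → k)) (hA : A = ⋃ i, P i) :
    (∏ i : Fin mm,
        (X ℓ + ∑ j ∈ J.filter (fun j => j < ℓ), C (b i ℓ j) * X j)) ∈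
          MvPolynomial.vanishingIdeal k A ∧
      IsLeadExp m
        (∏ i : Fin mm,
          (X ℓ + ∑ j ∈ J.filter (fun j => j < ℓ), C (b i ℓ j) * X j))
        (Finsupp.single ℓ mm) ∧
      Finsupp.single ℓ mm ∈ expC m (MvPolynomial.vanishingIdeal k A) ∧
      ¬ dPlane 0 J' ⊆ expD m (MvPolynomial.vanishingIdeal k A) :=
  product_witness_not_parallel_general m hvar J J' ℓ hℓ' hℓ b P hP A hA
end
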